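/- arXiv:2003.13427 — 4 statements merged into one kernel-verified Lean document; each statement's English description precedes it below -/
import Mathlib

section
/- For any continuously differentiable function ξ on (0, r₀] and any r ∈ (0, r₀/6), one has ξ(r) ≤ √(6/r₀) (∫_{r₀/6}^{r₀/3} |ξ(a)|² da)^{1/2} + (∫_r^{r₀/3} |ξ'(s)|² s ds)^{1/2} · |ln(r₀/3) − ln r|^{1/2}. -/
/-!
Pick `c ∈ [r₀/6, r₀/3]` where `|ξ|` is minimal; then `|ξ c|²` is at most the average of `|ξ|²`
over that interval. By the fundamental theorem of calculus `ξ r ≤ |ξ c| + ∫_r^c |ξ'|`, and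
Cauchy–Schwarz applied to `|ξ'| = (|ξ'| √s) · s^{-1/2}` bounds the last integral by
`(∫_r^c |ξ'|² s ds)^{1/2} (log c - log r)^{1/2}`.
-/

open MeasureTheory Set Real

theorem integral_mul_le_sqrt_mul_sqrt_of_nonneg {α : Type*} [MeasurableSpace α] {μ : Measure α}
    {f g : α → ℝ} (hf_nonneg : 0 ≤ᵐ[μ] f) (hg_nonneg : 0 ≤ᵐ[μ] g) (hf : MemLp f 2 μ)
    (hg : MemLp g 2 μ) :
    ∫ x, f x * g x ∂μ ≤ √(∫ x, f x ^ 2 ∂μ) * √(∫ x, g x ^ 2 ∂μ) := by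
  have := integral_mul_le_Lp_mul_Lq_of_nonneg HolderConjugate.two_two hf_nonneg hg_nonneg
    (by simpa using hf) (by simpa using hg)
  simpa only [rpow_two, sqrt_eq_rpow] using this

theorem ContinuousOn.memLp_restrict_Ioc {f : ℝ → ℝ} {a b : ℝ} (hf : ContinuousOn f (Icc a b))
    (p : ENNReal) : MemLp f p (volume.restrict (Ioc a b)) := by
  obtain ⟨C, hC⟩ := isCompact_Icc.exists_bound_of_continuousOn hf
  refine MemLp.of_bound ((hf.mono Ioc_subset_Icc_self).aestronglyMeasurable measurableSet_Ioc) C ?_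
  filter_upwards [ae_restrict_mem measurableSet_Ioc] with x hx
  exact hC x (Ioc_subset_Icc_self hx)

theorem setIntegral_Ioc_inv {r a : ℝ} (hr : 0 < r) (hra : r ≤ a) :
    ∫ s in Ioc r a, s⁻¹ = log a - log r := by
  rw [← intervalIntegral.integral_of_le hra, integral_inv_of_pos hr (hr.trans_le hra),
    log_div (hr.trans_le hra).ne' hr.ne']

theorem setIntegral_abs_le_sqrt_mul_sqrt_log {g : ℝ → ℝ} {r a : ℝ} (hr : 0 < r) (hra : r ≤ a)
    (hg : ContinuousOn g (Icc r a)) :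
    ∫ s in Ioc r a, |g s| ≤ √(∫ s in Ioc r a, |g s| ^ 2 * s) * √(log a - log r) := by
  have hpos : ∀ s ∈ Ioc r a, 0 < s := fun s hs => hr.trans hs.1
  have hsqrt : ContinuousOn (fun s => (√s)⁻¹) (Icc r a) :=
    continuous_sqrt.continuousOn.inv₀ fun s hs => (sqrt_pos.2 (hr.trans_le hs.1)).ne'
  have hcs := integral_mul_le_sqrt_mul_sqrt_of_nonneg (μ := volume.restrict (Ioc r a))
    (f := fun s => |g s| * √s) (g := fun s => (√s)⁻¹)
    (.of_forall fun s => by positivity) (.of_forall fun s => by positivity)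
    ((hg.abs.mul continuous_sqrt.continuousOn).memLp_restrict_Ioc 2) (hsqrt.memLp_restrict_Ioc 2)
  have hprod : ∫ s in Ioc r a, |g s| * √s * (√s)⁻¹ = ∫ s in Ioc r a, |g s| :=
    setIntegral_congr_fun measurableSet_Ioc fun s hs => by
      field_simp [(sqrt_pos.2 (hpos s hs)).ne']
  have hweight : ∫ s in Ioc r a, (|g s| * √s) ^ 2 = ∫ s in Ioc r a, |g s| ^ 2 * s :=
    setIntegral_congr_fun measurableSet_Ioc fun s hs => by
      simp only [mul_pow, sq_sqrt (hpos s hs).le]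
  have hinv : ∫ s in Ioc r a, (√s)⁻¹ ^ 2 = ∫ s in Ioc r a, s⁻¹ :=
    setIntegral_congr_fun measurableSet_Ioc fun s hs => by
      simp only [inv_pow, sq_sqrt (hpos s hs).le]
  rwa [hprod, hweight, hinv, setIntegral_Ioc_inv hr hra] at hcs

theorem le_abs_add_setIntegral_abs_deriv {f f' : ℝ → ℝ} {r a : ℝ} (hra : r ≤ a)
    (hf : ∀ x ∈ Icc r a, HasDerivAt f (f' x) x) (hf' : IntervalIntegrable f' volume r a) :
    f r ≤ |f a| + ∫ s in Ioc r a, |f' s| := by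
  have hftc : ∫ s in r..a, f' s = f a - f r :=
    intervalIntegral.integral_eq_sub_of_hasDerivAt
      (fun x hx => hf x (by rwa [uIcc_of_le hra] at hx)) hf'
  have hnorm : |∫ s in r..a, f' s| ≤ ∫ s in Ioc r a, |f' s| := by
    rw [intervalIntegral.integral_of_le hra]
    exact norm_integral_le_integral_norm f'
  linarith [le_abs_self (f a), neg_abs_le (∫ s in r..a, f' s)]

theorem exists_abs_le_sqrt_inv_mul_sqrt_setIntegral_sq {f : ℝ → ℝ} {a b : ℝ} (hab : a < b)
    (hf : ContinuousOn f (Icc a b)) :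
    ∃ c ∈ Icc a b, |f c| ≤ √((b - a)⁻¹) * √(∫ x in Ioc a b, |f x| ^ 2) := by
  obtain ⟨c, hc, hmin⟩ := isCompact_Icc.exists_isMinOn (nonempty_Icc.2 hab.le) hf.abs
  refine ⟨c, hc, ?_⟩
  have hle : |f c| ^ 2 * (b - a) ≤ ∫ x in Ioc a b, |f x| ^ 2 := by
    calc |f c| ^ 2 * (b - a) = ∫ _ in Ioc a b, |f c| ^ 2 := by
          rw [setIntegral_const, Real.volume_real_Ioc_of_le hab.le, smul_eq_mul, mul_comm]
      _ ≤ ∫ x in Ioc a b, |f x| ^ 2 :=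
          setIntegral_mono_on (integrableOn_const (by simp))
            ((hf.abs.pow 2).integrableOn_Icc.mono_set Ioc_subset_Icc_self)
            measurableSet_Ioc fun x hx =>
              pow_le_pow_left₀ (abs_nonneg _) (hmin (Ioc_subset_Icc_self hx)) 2
  rw [← sqrt_mul (inv_nonneg.2 (sub_nonneg.2 hab.le)), ← sqrt_sq (abs_nonneg (f c))]
  exact sqrt_le_sqrt (by rwa [inv_mul_eq_div, le_div_iff₀ (sub_pos.2 hab)])

theorem stmt_0_general (r₀ : ℝ) (ξ ξ' : ℝ → ℝ)
    (hderiv : ∀ x ∈ Set.Ioc (0:ℝ) r₀, HasDerivAt ξ (ξ' x) x)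
    (hcont : ContinuousOn ξ' (Set.Ioc 0 r₀))
    (r : ℝ) (hr : r ∈ Set.Ioo (0:ℝ) (r₀/6)) :
    ξ r ≤ Real.sqrt (6/r₀) * Real.sqrt (∫ a in Set.Ioc (r₀/6) (r₀/3), |ξ a|^2)
      + Real.sqrt (∫ s in Set.Ioc r (r₀/3), |ξ' s|^2 * s)
        * Real.sqrt |Real.log (r₀/3) - Real.log r| := by
  obtain ⟨hr0, hr6⟩ := hr
  have hr₀ : 0 < r₀ := by linarith
  have hsub : ∀ {u}, 0 < u → Icc u (r₀ / 3) ⊆ Ioc 0 r₀ := fun hu x hx =>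
    ⟨hu.trans_le hx.1, by linarith [hx.2]⟩
  obtain ⟨c, hc, hξc⟩ :=
    exists_abs_le_sqrt_inv_mul_sqrt_setIntegral_sq (a := r₀ / 6) (by linarith)
      fun x hx => (hderiv x (hsub (by positivity) hx)).continuousAt.continuousWithinAt
  rw [show (r₀ / 3 - r₀ / 6)⁻¹ = 6 / r₀ by field_simp; norm_num] at hξc
  have hrc : r ≤ c := by linarith [hc.1]
  have hsubc : Icc r c ⊆ Ioc 0 r₀ := (Icc_subset_Icc_right hc.2).trans (hsub hr0)
  have hftc := le_abs_add_setIntegral_abs_deriv hrc (fun x hx => hderiv x (hsubc hx))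
    ((hcont.mono hsubc).intervalIntegrable_of_Icc hrc)
  have hcs := setIntegral_abs_le_sqrt_mul_sqrt_log hr0 hrc (hcont.mono hsubc)
  have hweight : ∫ s in Ioc r c, |ξ' s| ^ 2 * s ≤ ∫ s in Ioc r (r₀ / 3), |ξ' s| ^ 2 * s :=
    setIntegral_mono_set
      ((((hcont.mono (hsub hr0)).abs.pow 2).mul continuousOn_id).integrableOn_Icc.mono_set
        Ioc_subset_Icc_self)
      ((ae_restrict_mem measurableSet_Ioc).mono fun s hs => by
        have : 0 < s := hr0.trans hs.1
        positivity)
      (Ioc_subset_Ioc_right hc.2).eventuallyLE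
  have hlog : log c - log r ≤ |log (r₀ / 3) - log r| :=
    (sub_le_sub_right (log_le_log (hr0.trans_le hrc) hc.2) _).trans (le_abs_self _)
  calc ξ r ≤ |ξ c| + ∫ s in Ioc r c, |ξ' s| := hftc
    _ ≤ _ := add_le_add hξc (hcs.trans (by gcongr))

/-- Weighted Hardy-type pointwise bound near the origin. -/
theorem stmt_0 (r₀ : ℝ) (hr₀ : 0 < r₀) (ξ ξ' : ℝ → ℝ)
    (hderiv : ∀ x ∈ Set.Ioc (0:ℝ) r₀, HasDerivAt ξ (ξ' x) x)
    (hcont : ContinuousOn ξ' (Set.Ioc 0 r₀))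
    (r : ℝ) (hr : r ∈ Set.Ioo (0:ℝ) (r₀/6)) :
    ξ r ≤ Real.sqrt (6/r₀) * Real.sqrt (∫ a in Set.Ioc (r₀/6) (r₀/3), |ξ a|^2)
      + Real.sqrt (∫ s in Set.Ioc r (r₀/3), |ξ' s|^2 * s)
        * Real.sqrt |Real.log (r₀/3) - Real.log r| :=
  stmt_0_general r₀ ξ ξ' hderiv hcont r hr
end

section
/- Let p : [0, r₀] → ℝ satisfy p ≥ 0, p(r₀) = 0, p' ≤ 0 on (s₁, r₀], and suppose g(s₁) := sup_{s₁ ≤ s ≤ r₀} p(s)/(−p'(s)) is finite. Then ∫_{s₁}^{r₀} (−p'(r)) ξ(r)² dr ≤ 2 p(s₁) ξ(s₁)² + 4 g(s₁) ∫_{s₁}^{r₀} p(r) ξ'(r)² dr for every C¹ function ξ on [s₁, r₀]. -/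
/-!
Integrating `(p ξ²)' = p' ξ² + 2 p ξ ξ'` over `[s₁, r₀]` and using `p r₀ = 0` gives
`∫ (-p') ξ² = p(s₁) ξ(s₁)² + ∫ 2 p ξ ξ'`, and the pointwise bound `p ≤ G (-p')` turns the last
integrand into at most `½ (-p') ξ² + 2 G p ξ'²`; absorbing the first term gives the inequality.

The supremum only controls `p` where `p' < 0` (where `p' = 0` the quotient is the junk value
`p / 0 = 0`). At a zero `u` of `p'` with `p u > 0`, `p` still has to fall to `p r₀ = 0`, so by the
mean value theorem `p'` is negative somewhere on the stretch where `p ≥ p u / 2`; by the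
intermediate value theorem `p'` then takes values there so close to `0` that `G (-p') < p`.
-/

open Set MeasureTheory

theorem two_mul_mul_mul_le_of_le_mul {P Q G a b : ℝ} (hP : 0 ≤ P) (hQ : 0 ≤ Q)
    (hPQ : P ≤ G * Q) : 2 * P * a * b ≤ 1 / 2 * Q * a ^ 2 + 2 * G * P * b ^ 2 := by
  rcases hQ.eq_or_lt with rfl | hQ
  · obtain rfl : P = 0 := le_antisymm (by simpa using hPQ) hP
    simp
  · nlinarith [sq_nonneg (Q * a - 2 * P * b),
      mul_nonneg (sub_nonneg.2 hPQ) (mul_nonneg hP (sq_nonneg b))]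

theorem exists_mem_Icc_apply_mem_Ico_of_eq_zero_of_neg {f : ℝ → ℝ} {a b δ : ℝ} (hab : a ≤ b)
    (hf : ContinuousOn f (Icc a b)) (ha : f a = 0) (hb : f b < 0) (hδ : 0 < δ) :
    ∃ y ∈ Icc a b, f y ∈ Ico (-δ) 0 := by
  obtain ⟨y, hy, hyv⟩ := intermediate_value_Icc' hab hf
    ⟨le_max_left (f b) (-δ), ha ▸ max_le hb.le (neg_nonpos.2 hδ.le)⟩
  exact ⟨y, hy, hyv ▸ ⟨le_max_right _ _, max_lt hb (neg_lt_zero.2 hδ)⟩⟩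

section

variable {a b G : ℝ} {p p' ξ ξ' : ℝ → ℝ}

theorem le_mul_neg_deriv_left_of_forall_deriv_neg (hab : a ≤ b)
    (hp : ∀ x ∈ Icc a b, HasDerivAt p (p' x) x) (hp'c : ContinuousOn p' (Icc a b))
    (hpb : p b = 0) (hp'le : ∀ x ∈ Icc a b, p' x ≤ 0)
    (hbound : ∀ x ∈ Icc a b, p' x < 0 → p x ≤ G * -p' x) :
    p a ≤ G * -p' a := by
  rcases (hp'le a (left_mem_Icc.2 hab)).lt_or_eq with hneg | hzero
  · exact hbound a (left_mem_Icc.2 hab) hneg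
  rw [hzero, neg_zero, mul_zero]
  by_contra! hpa
  have hpc : ContinuousOn p (Icc a b) := fun x hx => (hp x hx).continuousAt.continuousWithinAt
  set m := p a / 2 with hm
  have hm0 : 0 < m := by positivity
  obtain ⟨c, hc, hpcm⟩ : ∃ c ∈ Icc a b, p c = m :=
    intermediate_value_Icc' hab hpc ⟨by rw [hpb]; exact hm0.le, by linarith⟩
  have hanti : AntitoneOn p (Icc a b) := by
    refine antitoneOn_of_hasDerivWithinAt_nonpos (convex_Icc a b) hpc (f' := p') ?_ ?_ <;>
      rw [interior_Icc] <;> intro x hx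
    · exact (hp x (Ioo_subset_Icc_self hx)).hasDerivWithinAt
    · exact hp'le x (Ioo_subset_Icc_self hx)
  have hac : a < c := hc.1.lt_of_ne (by rintro rfl; linarith)
  have hIcc_ac : Icc a c ⊆ Icc a b := Icc_subset_Icc_right hc.2
  obtain ⟨z, hz, hslope⟩ := exists_hasDerivAt_eq_slope p p' hac (hpc.mono hIcc_ac)
    fun x hx => hp x (hIcc_ac (Ioo_subset_Icc_self hx))
  have hzI : z ∈ Icc a b := hIcc_ac (Ioo_subset_Icc_self hz)
  have hp_ge : ∀ y ∈ Icc a c, m ≤ p y := fun y hy => hpcm ▸ hanti (hIcc_ac hy) hc hy.2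
  have hp'z : p' z < 0 := by
    rw [hslope]; exact div_neg_of_neg_of_pos (by linarith) (by linarith [hac])
  have hG : 0 < G := by
    have := hbound z hzI hp'z
    nlinarith [hp_ge z (Ioo_subset_Icc_self hz)]
  obtain ⟨y, hy, hyv⟩ := exists_mem_Icc_apply_mem_Ico_of_eq_zero_of_neg hz.1.le
    (hp'c.mono (Icc_subset_Icc_right hzI.2)) hzero hp'z (by positivity : 0 < m / (2 * G))
  have hyI : y ∈ Icc a c := Icc_subset_Icc_right hz.2.le hy
  have hGp'y : G * -p' y ≤ m / 2 := by
    calc G * -p' y ≤ G * (m / (2 * G)) := by gcongr; exact neg_le.1 hyv.1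
      _ = m / 2 := by field_simp
  have := hbound y (hIcc_ac hyI) hyv.2
  linarith [hp_ge y hyI]

theorem integral_neg_deriv_mul_sq_le (hab : a ≤ b)
    (hp : ∀ x ∈ Icc a b, HasDerivAt p (p' x) x) (hξ : ∀ x ∈ Icc a b, HasDerivAt ξ (ξ' x) x)
    (hp'c : ContinuousOn p' (Icc a b)) (hξ'c : ContinuousOn ξ' (Icc a b))
    (hpnn : ∀ x ∈ Ioo a b, 0 ≤ p x) (hpb : p b = 0) (hp'le : ∀ x ∈ Ioo a b, p' x ≤ 0)
    (hbound : ∀ x ∈ Ioo a b, p x ≤ G * -p' x) :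
    ∫ x in a..b, -p' x * ξ x ^ 2 ≤ 2 * p a * ξ a ^ 2 + 4 * G * ∫ x in a..b, p x * ξ' x ^ 2 := by
  have hpc : ContinuousOn p (Icc a b) := fun x hx => (hp x hx).continuousAt.continuousWithinAt
  have hξc : ContinuousOn ξ (Icc a b) := fun x hx => (hξ x hx).continuousAt.continuousWithinAt
  have hint : ∀ {f : ℝ → ℝ}, ContinuousOn f (Icc a b) → IntervalIntegrable f volume a b :=
    fun hf => (uIcc_of_le hab ▸ hf).intervalIntegrable
  have hA : IntervalIntegrable (fun x => -p' x * ξ x ^ 2) volume a b :=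
    hint (hp'c.neg.mul (hξc.pow 2))
  have hB : IntervalIntegrable (fun x => p x * ξ' x ^ 2) volume a b :=
    hint (hpc.mul (hξ'c.pow 2))
  have hC : IntervalIntegrable (fun x => 2 * p x * ξ x * ξ' x) volume a b :=
    hint (((continuousOn_const.mul hpc).mul hξc).mul hξ'c)
  have hparts : ∫ x in a..b, -p' x * ξ x ^ 2 =
      p a * ξ a ^ 2 + ∫ x in a..b, 2 * p x * ξ x * ξ' x := by
    have hFTC : ∫ x in a..b, (2 * p x * ξ x * ξ' x - -p' x * ξ x ^ 2) =
        p b * ξ b ^ 2 - p a * ξ a ^ 2 := by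
      refine intervalIntegral.integral_eq_sub_of_hasDerivAt (f := fun x => p x * ξ x ^ 2)
        (fun x hx => ?_) (hC.sub hA)
      rw [uIcc_of_le hab] at hx
      exact ((hp x hx).mul ((hξ x hx).fun_pow 2)).congr_deriv (by push_cast; ring)
    rw [intervalIntegral.integral_sub hC hA, hpb] at hFTC
    linarith
  have hcross : ∫ x in a..b, 2 * p x * ξ x * ξ' x ≤
      ∫ x in a..b, (1 / 2 * (-p' x * ξ x ^ 2) + 2 * G * (p x * ξ' x ^ 2)) := by
    refine intervalIntegral.integral_mono_on_of_le_Ioo hab hC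
      ((hA.const_mul (1 / 2)).add (hB.const_mul (2 * G))) fun x hx => ?_
    have := two_mul_mul_mul_le_of_le_mul (a := ξ x) (b := ξ' x) (hpnn x hx)
      (neg_nonneg.2 (hp'le x hx)) (hbound x hx)
    linarith
  rw [intervalIntegral.integral_add (hA.const_mul (1 / 2)) (hB.const_mul (2 * G)),
    intervalIntegral.integral_const_mul, intervalIntegral.integral_const_mul] at hcross
  linarith

end

theorem stmt_4_general (r₀ s₁ : ℝ) (hlt : s₁ < r₀)
    (p p' ξ ξ' : ℝ → ℝ)
    (hp : ∀ x ∈ Set.Icc s₁ r₀, HasDerivAt p (p' x) x)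
    (hξ : ∀ x ∈ Set.Icc s₁ r₀, HasDerivAt ξ (ξ' x) x)
    (hp'c : ContinuousOn p' (Set.Icc s₁ r₀))
    (hξ'c : ContinuousOn ξ' (Set.Icc s₁ r₀))
    (hpnn : ∀ x ∈ Set.Icc s₁ r₀, 0 ≤ p x)
    (hpr₀ : p r₀ = 0)
    (hp'le : ∀ x ∈ Set.Ioc s₁ r₀, p' x ≤ 0)
    (G : ℝ)
    (hG : IsLUB ((fun s => p s / (-p' s)) '' Set.Icc s₁ r₀) G) :
    ∫ r in Set.Ioc s₁ r₀, (-p' r) * (ξ r)^2 ≤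
      2 * p s₁ * (ξ s₁)^2 + 4 * G * ∫ r in Set.Ioc s₁ r₀, p r * (ξ' r)^2 := by
  have hbound_neg : ∀ x ∈ Icc s₁ r₀, p' x < 0 → p x ≤ G * -p' x := fun x hx hneg =>
    (div_le_iff₀ (neg_pos.2 hneg)).1 (hG.1 ⟨x, hx, rfl⟩)
  have hbound : ∀ u ∈ Ioc s₁ r₀, p u ≤ G * -p' u := by
    intro u hu
    have hsub : Icc u r₀ ⊆ Icc s₁ r₀ := Icc_subset_Icc_left hu.1.le
    exact le_mul_neg_deriv_left_of_forall_deriv_neg hu.2 (fun x hx => hp x (hsub hx))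
      (hp'c.mono hsub) hpr₀ (fun x hx => hp'le x ⟨hu.1.trans_le hx.1, hx.2⟩)
      (fun x hx => hbound_neg x (hsub hx))
  simpa only [intervalIntegral.integral_of_le hlt.le] using
    integral_neg_deriv_mul_sq_le hlt.le hp hξ hp'c hξ'c
      (fun x hx => hpnn x (Ioo_subset_Icc_self hx)) hpr₀
      (fun x hx => hp'le x (Ioo_subset_Ioc_self hx))
      (fun x hx => hbound x (Ioo_subset_Ioc_self hx))

/-- Weighted Hardy-type boundary-degenerate inequality near r₀. -/
theorem stmt_4 (r₀ s₁ : ℝ) (hs₁ : 0 < s₁) (hlt : s₁ < r₀)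
    (p p' ξ ξ' : ℝ → ℝ)
    (hp : ∀ x ∈ Set.Icc s₁ r₀, HasDerivAt p (p' x) x)
    (hξ : ∀ x ∈ Set.Icc s₁ r₀, HasDerivAt ξ (ξ' x) x)
    (hp'c : ContinuousOn p' (Set.Icc s₁ r₀))
    (hξ'c : ContinuousOn ξ' (Set.Icc s₁ r₀))
    (hpnn : ∀ x ∈ Set.Icc s₁ r₀, 0 ≤ p x)
    (hpr₀ : p r₀ = 0)
    (hp'le : ∀ x ∈ Set.Ioc s₁ r₀, p' x ≤ 0)
    (G : ℝ)
    (hG : IsLUB ((fun s => p s / (-p' s)) '' Set.Icc s₁ r₀) G) :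
    ∫ r in Set.Ioc s₁ r₀, (-p' r) * (ξ r)^2 ≤
      2 * p s₁ * (ξ s₁)^2 + 4 * G * ∫ r in Set.Ioc s₁ r₀, p r * (ξ' r)^2 :=
  stmt_4_general r₀ s₁ hlt p p' ξ ξ' hp hξ hp'c hξ'c hpnn hpr₀ hp'le G hG
end

section
/- Suppose λ : (0, ∞) → ℝ is continuous and strictly increasing, λ(s) ≤ −C₀ + C₁ s for some constants C₀, C₁ > 0, and λ(s) → +∞ as s → ∞. Let S = λ⁻¹((−∞, 0)) and define μ(s) = √(−λ(s)) on S. Then S = (0, s*) for some s* ∈ (0, ∞), and there exists a unique s ∈ S with s = μ(s). -/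
/-!
Both the negative set of `lam` and the fixed points of `s ↦ √(-lam s)` are read off from zeros
of strictly increasing continuous functions on `(0, ∞)` that are negative near `0` and tend to
`+∞`: `s*` is the zero of `lam`, and a fixed point `s = √(-lam s)` is exactly a zero of
`s ↦ s ^ 2 + lam s`, which exists by the intermediate value theorem and is unique by strict
monotonicity. The bound `lam s ≤ -C₀ + C₁ s` makes `s ^ 2 + lam s` (hence `lam`) negative near `0`.
-/

open Set Filter Topology

theorem exists_zero_of_continuousOn_Ioi {f : ℝ → ℝ} {a : ℝ} (hf : ContinuousOn f (Ioi a))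
    (hneg : ∀ᶠ s in 𝓝[>] a, f s < 0) (htop : Tendsto f atTop atTop) :
    ∃ c, a < c ∧ f c = 0 := by
  obtain ⟨x, hfx, hax⟩ := (hneg.and self_mem_nhdsWithin).exists
  obtain ⟨y, hfy, hxy⟩ := ((htop.eventually_ge_atTop 0).and (eventually_ge_atTop x)).exists
  have hIcc : Icc x y ⊆ Ioi a := fun t ht => lt_of_lt_of_le hax ht.1
  obtain ⟨c, hc, hfc⟩ := intermediate_value_Icc hxy (hf.mono hIcc) ⟨hfx.le, hfy⟩
  exact ⟨c, hIcc hc, hfc⟩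

theorem StrictMonoOn.setOf_neg_eq_Ioo {f : ℝ → ℝ} {a c : ℝ} (hf : StrictMonoOn f (Ioi a))
    (hac : a < c) (hfc : f c = 0) : {s | a < s ∧ f s < 0} = Ioo a c := by
  ext s
  refine and_congr_right fun has => ?_
  rw [← hfc]
  exact hf.lt_iff_lt has hac

theorem eventually_sq_add_neg_of_le_affine {lam : ℝ → ℝ} {C₀ C₁ : ℝ} (hC₀ : 0 < C₀)
    (hub : ∀ s > (0:ℝ), lam s ≤ -C₀ + C₁ * s) : ∀ᶠ s in 𝓝[>] 0, s ^ 2 + lam s < 0 := by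
  have hbound : Tendsto (fun s : ℝ => s ^ 2 + (-C₀ + C₁ * s)) (𝓝[>] 0) (𝓝 (-C₀)) := by
    have : Continuous fun s : ℝ => s ^ 2 + (-C₀ + C₁ * s) := by fun_prop
    exact (this.tendsto' 0 _ (by ring)).mono_left nhdsWithin_le_nhds
  filter_upwards [hbound.eventually_lt_const (neg_neg_of_pos hC₀), self_mem_nhdsWithin]
    with s hs hs0
  linarith [hub s hs0]

theorem eq_sqrt_neg_iff_sq_add_eq_zero {s x : ℝ} (hs : 0 < s) : s = √(-x) ↔ s ^ 2 + x = 0 := by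
  rw [eq_comm, Real.sqrt_eq_iff_mul_self_eq_of_pos hs]
  constructor <;> intro h <;> linarith [sq s]

theorem stmt_5_general (lam : ℝ → ℝ) (C₀ C₁ : ℝ) (hC₀ : 0 < C₀)
    (hcont : ContinuousOn lam (Set.Ioi 0))
    (hmono : StrictMonoOn lam (Set.Ioi 0))
    (hub : ∀ s > (0:ℝ), lam s ≤ -C₀ + C₁ * s)
    (hlim : Filter.Tendsto lam Filter.atTop Filter.atTop) :
    ∃ sstar : ℝ, 0 < sstar ∧ {s : ℝ | 0 < s ∧ lam s < 0} = Set.Ioo 0 sstar ∧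
      ∃! s : ℝ, (0 < s ∧ lam s < 0) ∧ s = Real.sqrt (-lam s) := by
  set g : ℝ → ℝ := fun s => s ^ 2 + lam s
  have hg_neg : ∀ᶠ s in 𝓝[>] 0, g s < 0 := eventually_sq_add_neg_of_le_affine hC₀ hub
  have hlam_neg : ∀ᶠ s in 𝓝[>] 0, lam s < 0 :=
    hg_neg.mono fun s hs => by nlinarith [sq_nonneg s]
  have hg_mono : StrictMonoOn g (Ioi 0) :=
    ((pow_left_strictMonoOn₀ two_ne_zero).mono fun _ hs => le_of_lt hs).add hmono
  have hg_cont : ContinuousOn g (Ioi 0) := (continuousOn_pow 2).add hcont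
  have hg_top : Tendsto g atTop atTop := (tendsto_pow_atTop two_ne_zero).atTop_add_atTop hlim
  obtain ⟨sstar, hsstar, hlam_sstar⟩ := exists_zero_of_continuousOn_Ioi hcont hlam_neg hlim
  obtain ⟨r, hr, hgr⟩ := exists_zero_of_continuousOn_Ioi hg_cont hg_neg hg_top
  refine ⟨sstar, hsstar, hmono.setOf_neg_eq_Ioo hsstar hlam_sstar, r,
    ⟨⟨hr, by nlinarith [hgr]⟩, (eq_sqrt_neg_iff_sq_add_eq_zero hr).2 hgr⟩, ?_⟩
  rintro t ⟨⟨ht, -⟩, hfix⟩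
  exact hg_mono.injOn ht hr (((eq_sqrt_neg_iff_sq_add_eq_zero ht).1 hfix).trans hgr.symm)

/-- Fixed-point argument converting the modified variational problem into a
genuine growing mode: the negative set of `lam` is an interval `(0, s*)` and
there is a unique fixed point `s = √(-lam s)`. -/
theorem stmt_5 (lam : ℝ → ℝ) (C₀ C₁ : ℝ) (hC₀ : 0 < C₀) (hC₁ : 0 < C₁)
    (hcont : ContinuousOn lam (Set.Ioi 0))
    (hmono : StrictMonoOn lam (Set.Ioi 0))
    (hub : ∀ s > (0:ℝ), lam s ≤ -C₀ + C₁ * s)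
    (hlim : Filter.Tendsto lam Filter.atTop Filter.atTop) :
    ∃ sstar : ℝ, 0 < sstar ∧ {s : ℝ | 0 < s ∧ lam s < 0} = Set.Ioo 0 sstar ∧
      ∃! s : ℝ, (0 < s ∧ lam s < 0) ∧ s = Real.sqrt (-lam s) :=
  stmt_5_general lam C₀ C₁ hC₀ hcont hmono hub hlim
end

section
/- Let p ∈ C¹([0, r₀]) with p ≥ 0, p(r₀) = 0, p not identically zero, and define B_θ²(r) = −(2/r²) ∫₀^r s² p'(s) ds ≥ 0. Then there exists r* ∈ (0, r₀) such that p'(r*) + 2γ p(r*) B_θ²(r*) / (r* (γ p(r*) + B_θ²(r*))) < 0, where γ > 1 is a fixed constant. -/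
/-!
If the combination were nonnegative on `(0, r₀)`, then, since `B/(γ p + B) ≤ 1`, we would get
`r p' + 2γ p ≥ 0` there, i.e. `r ↦ r ^ (2γ) * p r` would be nondecreasing. Starting from a point
where `p > 0`, this forces `p r₀ > 0`.
-/

open Set

lemma mul_div_add_le_left {u v : ℝ} (hu : 0 ≤ u) (hv : 0 ≤ v) : u * v / (u + v) ≤ u := by
  rcases (add_nonneg hu hv).eq_or_lt with h | h
  · rw [← h, div_zero]; exact hu
  · rw [div_le_iff₀ h]; nlinarith

lemma mul_add_mul_nonneg_of_add_div_nonneg {γ r P dP B : ℝ} (hγ : 0 ≤ γ) (hr : 0 < r)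
    (hP : 0 ≤ P) (hB : 0 ≤ B) (h : 0 ≤ dP + 2 * γ * P * B / (r * (γ * P + B))) :
    0 ≤ 2 * γ * P + r * dP := by
  have hbound : 2 * γ * P * B / (r * (γ * P + B)) ≤ 2 * γ * P / r := calc
    2 * γ * P * B / (r * (γ * P + B)) = 2 * (γ * P * B / (γ * P + B)) / r := by
      rw [mul_comm r, ← div_div]; ring
    _ ≤ 2 * (γ * P) / r := by gcongr; exact mul_div_add_le_left (by positivity) hB
    _ = 2 * γ * P / r := by ring
  have hsum : 0 ≤ dP + 2 * γ * P / r := h.trans (by linarith)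
  have hscaled := mul_nonneg hr.le hsum
  rwa [mul_add, mul_div_cancel₀ _ hr.ne', add_comm] at hscaled

lemma monotoneOn_rpow_mul_of_mul_add_mul_deriv_nonneg {c a b : ℝ} {f f' : ℝ → ℝ} (ha : 0 < a)
    (hf : ContinuousOn f (Icc a b)) (hf' : ∀ x ∈ Ioo a b, HasDerivAt f (f' x) x)
    (h : ∀ x ∈ Ioo a b, 0 ≤ c * f x + x * f' x) :
    MonotoneOn (fun x => x ^ c * f x) (Icc a b) := by
  have hderiv : ∀ x ∈ Ioo a b,
      HasDerivAt (fun x => x ^ c * f x) (x ^ (c - 1) * (c * f x + x * f' x)) x := by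
    intro x hx
    have hx0 : 0 < x := ha.trans hx.1
    refine ((Real.hasDerivAt_rpow_const (p := c) (Or.inl hx0.ne')).mul (hf' x hx)).congr_deriv ?_
    have hpow : x ^ c = x ^ (c - 1) * x := by
      rw [← Real.rpow_add_one hx0.ne', sub_add_cancel]
    rw [hpow]
    ring
  refine monotoneOn_of_hasDerivWithinAt_nonneg (f' := fun x => x ^ (c - 1) * (c * f x + x * f' x))
    (convex_Icc a b) ?_ ?_ ?_
  · exact (continuousOn_id.rpow_const fun x hx => Or.inl (ha.trans_le hx.1).ne').mul hf
  · rw [interior_Icc]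
    exact fun x hx => (hderiv x hx).hasDerivWithinAt
  · rw [interior_Icc]
    intro x hx
    exact mul_nonneg (Real.rpow_nonneg (ha.trans hx.1).le _) (h x hx)

lemma pos_of_mul_add_mul_deriv_nonneg {c a b : ℝ} {f f' : ℝ → ℝ} (ha : 0 < a) (hab : a ≤ b)
    (hf : ContinuousOn f (Icc a b)) (hf' : ∀ x ∈ Ioo a b, HasDerivAt f (f' x) x)
    (h : ∀ x ∈ Ioo a b, 0 ≤ c * f x + x * f' x) (hfa : 0 < f a) : 0 < f b := by
  have hle : a ^ c * f a ≤ b ^ c * f b :=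
    monotoneOn_rpow_mul_of_mul_add_mul_deriv_nonneg ha hf hf' h (left_mem_Icc.2 hab)
      (right_mem_Icc.2 hab) hab
  have : 0 < b ^ c * f b := (mul_pos (Real.rpow_pos_of_pos ha c) hfa).trans_le hle
  exact pos_of_mul_pos_right this (Real.rpow_nonneg (ha.le.trans hab) c)

theorem stmt_8_general (r₀ γ : ℝ) (hr₀ : 0 < r₀) (hγ : 1 < γ)
    (p p' : ℝ → ℝ)
    (hp : ∀ x ∈ Set.Icc 0 r₀, HasDerivAt p (p' x) x)
    (hpnn : ∀ x ∈ Set.Icc 0 r₀, 0 ≤ p x)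
    (hpr₀ : p r₀ = 0)
    (hne : ∃ x ∈ Set.Icc (0:ℝ) r₀, p x ≠ 0)
    (Bsq : ℝ → ℝ)
    (hBnn : ∀ r ∈ Set.Ioc (0:ℝ) r₀, 0 ≤ Bsq r) :
    ∃ rs ∈ Set.Ioo (0:ℝ) r₀,
      p' rs + 2 * γ * p rs * Bsq rs / (rs * (γ * p rs + Bsq rs)) < 0 := by
  by_contra! hcon
  obtain ⟨x, hx, hpx⟩ := hne
  have hx_cl : x ∈ closure (Ioo 0 r₀) := by rwa [closure_Ioo hr₀.ne]
  obtain ⟨a, hpa, ha⟩ := mem_closure_iff_nhds.mp hx_cl _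
    ((hp x hx).continuousAt.preimage_mem_nhds (Ioi_mem_nhds ((hpnn x hx).lt_of_ne' hpx)))
  have hsub : Icc a r₀ ⊆ Icc 0 r₀ := Icc_subset_Icc ha.1.le le_rfl
  have hpr₀_pos : 0 < p r₀ := by
    refine pos_of_mul_add_mul_deriv_nonneg (c := 2 * γ) ha.1 ha.2.le
      (fun y hy => (hp y (hsub hy)).continuousAt.continuousWithinAt)
      (fun y hy => hp y (hsub (Ioo_subset_Icc_self hy))) (fun y hy => ?_) hpa
    have hy : y ∈ Ioo 0 r₀ := ⟨ha.1.trans hy.1, hy.2⟩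
    exact mul_add_mul_nonneg_of_add_div_nonneg (by linarith) hy.1 (hpnn y (Ioo_subset_Icc_self hy))
      (hBnn y (Ioo_subset_Ioc_self hy)) (hcon y hy)
  exact hpr₀_pos.ne' hpr₀

/-- Unconditional m = 0 (sausage) instability criterion for any z-pinch
equilibrium. -/
theorem stmt_8 (r₀ γ : ℝ) (hr₀ : 0 < r₀) (hγ : 1 < γ)
    (p p' : ℝ → ℝ)
    (hp : ∀ x ∈ Set.Icc 0 r₀, HasDerivAt p (p' x) x)
    (hp'c : ContinuousOn p' (Set.Icc 0 r₀))
    (hpnn : ∀ x ∈ Set.Icc 0 r₀, 0 ≤ p x)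
    (hpr₀ : p r₀ = 0)
    (hne : ∃ x ∈ Set.Icc (0:ℝ) r₀, p x ≠ 0)
    (Bsq : ℝ → ℝ)
    (hBsq : ∀ r ∈ Set.Ioc (0:ℝ) r₀,
      Bsq r = -(2/r^2) * ∫ s in Set.Ioc (0:ℝ) r, s^2 * p' s)
    (hBnn : ∀ r ∈ Set.Ioc (0:ℝ) r₀, 0 ≤ Bsq r) :
    ∃ rs ∈ Set.Ioo (0:ℝ) r₀,
      p' rs + 2 * γ * p rs * Bsq rs / (rs * (γ * p rs + Bsq rs)) < 0 :=
  stmt_8_general r₀ γ hr₀ hγ p p' hp hpnn hpr₀ hne Bsq hBnn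
end
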